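/- arXiv:1406.2271 — 4 statements merged into one kernel-verified Lean document; each statement's English description precedes it below -/
import Mathlib

section
/- Let G be a connected finite simple graph on n vertices and S a nonempty proper subset of vertices (the grounded nodes). Let λ be the smallest eigenvalue of the grounded Laplacian L_g(S), and let x be a nonnegative eigenvector of L_g(S) corresponding to λ, normalized so that its largest component equals 1, with smallest component x_min. Then λ ≥ (|∂S|/(n−|S|))·x_min. -/
/-!
Sum the eigen-equation `L_g(S) x = λ x` over all non-grounded vertices. The `j`-th column sum
of `L_g(S)` is the number `c_j` of neighbours of `j` in `S`, because the full Laplacian has zero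
column sums; so `λ ∑ x_i = ∑ c_j x_j ≥ x_min ∑ c_j = x_min |∂S|`. Since `L_g(S)` is positive
semidefinite, `λ ≥ 0`, and `∑ x_i ≤ n - |S|` gives the bound.
-/

open Filter

/-- The Laplacian matrix of a finite simple graph, over `ℝ`. -/
noncomputable def lapR {V : Type*} [Fintype V] [DecidableEq V] (G : SimpleGraph V) :
    Matrix V V ℝ :=
  letI := Classical.decRel G.Adj
  SimpleGraph.lapMatrix ℝ G

/-- The grounded Laplacian: the principal submatrix of the Laplacian obtained by deleting
the rows and columns indexed by the grounded set `S`. -/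
noncomputable def groundedLaplacian {V : Type*} [Fintype V] [DecidableEq V]
    (G : SimpleGraph V) (S : Finset V) :
    Matrix {v : V // v ∉ S} {v : V // v ∉ S} ℝ :=
  (lapR G).submatrix Subtype.val Subtype.val

/-- The number of edges of `G` with exactly one endpoint in `X` (counted once per edge). -/
noncomputable def boundaryCard {V : Type*} [Fintype V] [DecidableEq V]
    (G : SimpleGraph V) (X : Finset V) : ℕ :=
  letI := Classical.decRel G.Adj
  (Finset.univ.filter fun p : V × V => p.1 ∈ X ∧ p.2 ∉ X ∧ G.Adj p.1 p.2).card

/-- `lam` is the smallest (real) eigenvalue of the matrix `M`. -/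
def IsSmallestEigenvalue {m : Type*} [Fintype m] (M : Matrix m m ℝ) (lam : ℝ) : Prop :=
  (∃ x : m → ℝ, x ≠ 0 ∧ M.mulVec x = lam • x) ∧
  ∀ μ : ℝ, (∃ x : m → ℝ, x ≠ 0 ∧ M.mulVec x = μ • x) → lam ≤ μ

/-- The second-smallest root (with multiplicity) of the characteristic polynomial of `M`. -/
noncomputable def secondSmallestEigenvalue {m : Type*} [Fintype m] [DecidableEq m]
    (M : Matrix m m ℝ) : ℝ :=
  (M.charpoly.roots.sort (· ≤ ·)).getD 1 0

/-- The subgraph induced on the complement of `S`, as a graph on the subtype. -/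
def inducedSub {V : Type*} [DecidableEq V] (G : SimpleGraph V) (S : Finset V) :
    SimpleGraph {v : V // v ∉ S} :=
  SimpleGraph.comap Subtype.val G

/-- The degree of vertex `v` in `G`. -/
noncomputable def degOf {V : Type*} [Fintype V] [DecidableEq V] (G : SimpleGraph V) (v : V) : ℕ :=
  letI := Classical.decRel G.Adj
  G.degree v

open Finset Matrix

namespace Matrix

variable {m : Type*} [Fintype m]

theorem PosSemidef.nonneg_of_mulVec_eq_smul {M : Matrix m m ℝ} (hM : M.PosSemidef)
    {x : m → ℝ} (hx : x ≠ 0) {μ : ℝ} (h : M *ᵥ x = μ • x) : 0 ≤ μ := by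
  have hxx : 0 < x ⬝ᵥ x := by simpa using dotProduct_self_star_pos_iff.2 hx
  have hq := hM.dotProduct_mulVec_nonneg x
  rw [h, star_trivial, dotProduct_smul, smul_eq_mul] at hq
  exact nonneg_of_mul_nonneg_left hq hxx

theorem sum_mulVec_apply {l R : Type*} [Fintype l] [CommSemiring R] (M : Matrix l m R)
    (x : m → R) : ∑ i, (M *ᵥ x) i = ∑ j, (∑ i, M i j) * x j := by
  simp only [mulVec, dotProduct, sum_mul]
  exact sum_comm

theorem PosSemidef.mul_sum_sum_le_mul_card_of_mulVec_eq_smul {M : Matrix m m ℝ}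
    (hM : M.PosSemidef) (hcol : ∀ j, 0 ≤ ∑ i, M i j) {x : m → ℝ} (hx : x ≠ 0) {μ : ℝ}
    (h : M *ᵥ x = μ • x) (hle : ∀ i, x i ≤ 1) {a : ℝ} (ha : ∀ i, a ≤ x i) :
    a * ∑ j, ∑ i, M i j ≤ μ * Fintype.card m :=
  calc a * ∑ j, ∑ i, M i j = ∑ j, (∑ i, M i j) * a := by simp only [mul_sum, mul_comm]
    _ ≤ ∑ j, (∑ i, M i j) * x j :=
        sum_le_sum fun j _ => mul_le_mul_of_nonneg_left (ha j) (hcol j)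
    _ = μ * ∑ j, x j := by rw [← sum_mulVec_apply, h]; simp [mul_sum]
    _ ≤ μ * Fintype.card m := by
      gcongr
      · exact hM.nonneg_of_mulVec_eq_smul hx h
      · exact (sum_le_sum fun i _ => hle i).trans_eq (by simp)

end Matrix

theorem SimpleGraph.sum_lapMatrix_apply_left {V : Type*} [Fintype V] [DecidableEq V]
    (G : SimpleGraph V) [DecidableRel G.Adj] (j : V) : ∑ i, G.lapMatrix ℝ i j = 0 := by
  simpa [mulVec, dotProduct, (G.isSymm_lapMatrix ℝ).apply j] using
    congrFun (G.lapMatrix_mulVec_const_eq_zero (R := ℝ)) j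

section GroundedLaplacian

open SimpleGraph

variable {V : Type*} [Fintype V] [DecidableEq V] (G : SimpleGraph V) (S : Finset V)

section DecidableAdj

variable [DecidableRel G.Adj]

theorem lapR_eq_lapMatrix : lapR G = G.lapMatrix ℝ := by
  unfold lapR
  congr

theorem sum_groundedLaplacian_apply_left (j : {v // v ∉ S}) :
    ∑ i, groundedLaplacian G S i j = #{v ∈ S | G.Adj v j} := by
  have hS : ∑ v ∈ S, G.lapMatrix ℝ v j = -#{v ∈ S | G.Adj v j} := by
    rw [card_filter, Nat.cast_sum, ← sum_neg_distrib]
    refine sum_congr rfl fun v hv => ?_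
    have hne : v ≠ j := fun h => j.2 (h ▸ hv)
    simp [lapMatrix, degMatrix, hne]
  have hSc : ∑ v ∈ Sᶜ, G.lapMatrix ℝ v j = ∑ i, groundedLaplacian G S i j := by
    rw [sum_subtype Sᶜ fun v => mem_compl, groundedLaplacian, lapR_eq_lapMatrix]
    rfl
  linarith [sum_add_sum_compl S (G.lapMatrix ℝ · j), sum_lapMatrix_apply_left G j]

theorem boundaryCard_eq_sum_card_filter_adj :
    boundaryCard G S = ∑ j : {v // v ∉ S}, #{v ∈ S | G.Adj v j} :=
  calc boundaryCard G S = #{p ∈ S ×ˢ Sᶜ | G.Adj p.1 p.2} := by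
        unfold boundaryCard
        convert rfl using 2
        ext p
        simp [and_assoc]
    _ = ∑ w ∈ Sᶜ, #{v ∈ S | G.Adj v w} := by
        simp only [card_filter, sum_product_right]
    _ = ∑ j : {v // v ∉ S}, #{v ∈ S | G.Adj v j} := sum_subtype Sᶜ (fun _ => mem_compl) _

end DecidableAdj

theorem posSemidef_groundedLaplacian : (groundedLaplacian G S).PosSemidef := by
  classical
  rw [groundedLaplacian, lapR_eq_lapMatrix]
  exact (posSemidef_lapMatrix ℝ G).submatrix _

theorem sum_sum_groundedLaplacian :
    ∑ j, ∑ i, groundedLaplacian G S i j = boundaryCard G S := by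
  classical
  simp only [sum_groundedLaplacian_apply_left, boundaryCard_eq_sum_card_filter_adj, Nat.cast_sum]

theorem sum_groundedLaplacian_apply_left_nonneg (j : {v // v ∉ S}) :
    0 ≤ ∑ i, groundedLaplacian G S i j := by
  classical
  rw [sum_groundedLaplacian_apply_left]
  positivity

end GroundedLaplacian

theorem smallest_eigenvalue_lower_bound_general {n : ℕ} (G : SimpleGraph (Fin n))
    (S : Finset (Fin n)) (lam : ℝ) (x : {v : Fin n // v ∉ S} → ℝ) (hx0 : x ≠ 0)
    (heig : (groundedLaplacian G S).mulVec x = lam • x) (hxle : ∀ i, x i ≤ 1)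
    (xmin : ℝ) (hxminle : ∀ i, xmin ≤ x i) :
    (boundaryCard G S : ℝ) / ((n : ℝ) - S.card) * xmin ≤ lam := by
  have hpsd := posSemidef_groundedLaplacian G S
  have hcard : (n : ℝ) - #S = Fintype.card {v // v ∉ S} := by
    rw [Fintype.card_subtype_compl, Fintype.card_coe, Fintype.card_fin,
      Nat.cast_sub (card_le_univ S |>.trans_eq (Fintype.card_fin n))]
  have hbound := hpsd.mul_sum_sum_le_mul_card_of_mulVec_eq_smul
    (sum_groundedLaplacian_apply_left_nonneg G S) hx0 heig hxle hxminle
  rw [sum_sum_groundedLaplacian] at hbound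
  rw [hcard, div_mul_eq_mul_div]
  exact div_le_of_le_mul₀ (Nat.cast_nonneg _) (hpsd.nonneg_of_mulVec_eq_smul hx0 heig)
    (by linarith)

/-- For a connected graph `G` on `n` vertices with grounded set `S` (nonempty and
proper), if `lam` is the smallest eigenvalue of the grounded Laplacian and `x` a corresponding
nonnegative eigenvector normalized so its largest component equals `1`, then
`lam ≥ (|∂S|/(n-|S|)) · x_min`. -/
theorem smallest_eigenvalue_lower_bound {n : ℕ} (G : SimpleGraph (Fin n))
    (hG : G.Connected) (S : Finset (Fin n)) (hS : S.Nonempty) (hSp : S ⊂ Finset.univ)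
    (lam : ℝ) (hlam : IsSmallestEigenvalue (groundedLaplacian G S) lam)
    (x : {v : Fin n // v ∉ S} → ℝ) (hx0 : x ≠ 0)
    (heig : (groundedLaplacian G S).mulVec x = lam • x)
    (hxnn : ∀ i, 0 ≤ x i)
    (hxle : ∀ i, x i ≤ 1) (hxmax : ∃ i, x i = 1)
    (xmin : ℝ) (hxminle : ∀ i, xmin ≤ x i) (hxminmem : ∃ i, x i = xmin) :
    (boundaryCard G S : ℝ) / ((n : ℝ) - S.card) * xmin ≤ lam :=
  smallest_eigenvalue_lower_bound_general G S lam x hx0 heig hxle xmin hxminle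
end

section
/- Let G be a finite simple graph on n vertices and S a nonempty proper subset of vertices. Then the smallest eigenvalue λ of the grounded Laplacian L_g(S) satisfies λ ≤ |∂X|/|X| for every nonempty subset X ⊆ V∖S; in particular λ ≤ min over nonempty X ⊆ V∖S of |∂X|/|X|. -/
open Filter

/-!
Evaluate the quadratic form of the grounded Laplacian at the indicator vector `1_X`. Since `X`
avoids `S`, this equals the quadratic form of the full Laplacian, `∑_{ij ∈ E} (1_X i - 1_X j)² =
|∂X|`, while `‖1_X‖² = |X|`. Every eigenvalue of the symmetric matrix is at least `lam`, so the
Rayleigh quotient `|∂X| / |X|` is at least `lam` as well.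
-/

open Matrix

theorem Fintype.sum_subtype_of_eq_zero {ι M : Type*} [Fintype ι] [AddCommMonoid M]
    {p : ι → Prop} [DecidablePred p] (f : ι → M) (hf : ∀ i, ¬ p i → f i = 0) :
    ∑ i : Subtype p, f i = ∑ i, f i := by
  rw [← Fintype.sum_subtype_add_sum_subtype p f,
    Fintype.sum_eq_zero (fun i : {i // ¬ p i} => f i) fun i => hf i i.2, add_zero]

namespace Matrix

variable {m : Type*} [Fintype m] {R : Type*} [NonUnitalNonAssocSemiring R]

theorem IsHermitian.mul_dotProduct_self_le_dotProduct_mulVec [DecidableEq m] {M : Matrix m m ℝ}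
    (hM : M.IsHermitian) {lam : ℝ}
    (hlam : ∀ μ : ℝ, (∃ x : m → ℝ, x ≠ 0 ∧ M *ᵥ x = μ • x) → lam ≤ μ) (x : m → ℝ) :
    lam * (x ⬝ᵥ x) ≤ x ⬝ᵥ M *ᵥ x := by
  have hN : (M - lam • 1).IsHermitian :=
    hM.sub (isHermitian_one.smul (IsSelfAdjoint.all lam))
  have hpsd : (M - lam • 1).PosSemidef := by
    refine hN.posSemidef_iff_eigenvalues_nonneg.mpr fun i => ?_
    have hev : M *ᵥ ⇑(hN.eigenvectorBasis i) =
        (hN.eigenvalues i + lam) • ⇑(hN.eigenvectorBasis i) := by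
      have hNi := hN.mulVec_eigenvectorBasis i
      rw [sub_mulVec, smul_mulVec, one_mulVec, sub_eq_iff_eq_add] at hNi
      rw [hNi, add_smul]
    have hne : (⇑(hN.eigenvectorBasis i) : m → ℝ) ≠ 0 := fun h0 =>
      (hN.eigenvectorBasis.orthonormal.ne_zero i) (by ext j; exact congrFun h0 j)
    simpa using hlam _ ⟨_, hne, hev⟩
  have hquad := hpsd.dotProduct_mulVec_nonneg x
  rw [star_trivial, sub_mulVec, smul_mulVec, one_mulVec, dotProduct_sub, dotProduct_smul,
    smul_eq_mul] at hquad
  linarith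

theorem dotProduct_comp_val {p : m → Prop} [DecidablePred p] (x : m → R) {y : m → R}
    (hy : ∀ i, ¬ p i → y i = 0) :
    (fun i : Subtype p => x i) ⬝ᵥ (fun i => y i) = x ⬝ᵥ y :=
  Fintype.sum_subtype_of_eq_zero (fun i => x i * y i) fun i hi => by rw [hy i hi, mul_zero]

theorem submatrix_val_mulVec_comp_val {p : m → Prop} [DecidablePred p] (M : Matrix m m R)
    {y : m → R} (hy : ∀ i, ¬ p i → y i = 0) :
    M.submatrix Subtype.val Subtype.val *ᵥ (fun i : Subtype p => y i) =
      fun i : Subtype p => (M *ᵥ y) i :=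
  funext fun i => dotProduct_comp_val (M i) hy

end Matrix

section Laplacian

variable {V : Type*} [Fintype V] [DecidableEq V] (G : SimpleGraph V) (X : Finset V)

theorem boundaryCard_eq_sum [DecidableRel G.Adj] :
    (boundaryCard G X : ℝ) = ∑ i, ∑ j, if i ∈ X ∧ j ∉ X ∧ G.Adj i j then 1 else 0 := by
  rw [boundaryCard, ← Fintype.sum_prod_type', Finset.natCast_card_filter]
  congr!

theorem lapR_dotProduct_indicator :
    (X : Set V).indicator 1 ⬝ᵥ lapR G *ᵥ (X : Set V).indicator 1 = (boundaryCard G X : ℝ) := by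
  classical
  set y : V → ℝ := (X : Set V).indicator 1
  have hsq : ∀ i j, (if G.Adj i j then (y i - y j) ^ 2 else 0) =
      (if i ∈ X ∧ j ∉ X ∧ G.Adj i j then 1 else 0) +
        (if j ∈ X ∧ i ∉ X ∧ G.Adj j i then 1 else 0) := by
    intro i j
    by_cases hi : i ∈ X <;> by_cases hj : j ∈ X <;> by_cases hij : G.Adj i j <;>
      simp [y, hi, hj, hij, G.adj_comm]
  rw [← toLinearMap₂'_apply', lapR, SimpleGraph.lapMatrix_toLinearMap₂']
  simp_rw [hsq, Finset.sum_add_distrib]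
  rw [Finset.sum_comm (f := fun i j => if j ∈ X ∧ i ∉ X ∧ G.Adj j i then (1 : ℝ) else 0),
    ← boundaryCard_eq_sum]
  ring

theorem indicator_dotProduct_self :
    (X : Set V).indicator 1 ⬝ᵥ (X : Set V).indicator 1 = (X.card : ℝ) := by
  classical
  simp [dotProduct, Set.indicator_apply]

end Laplacian

theorem groundedLaplacian_isHermitian {V : Type*} [Fintype V] [DecidableEq V]
    (G : SimpleGraph V) (S : Finset V) : (groundedLaplacian G S).IsHermitian := by
  classical
  exact (G.isHermitian_lapMatrix ℝ).submatrix Subtype.val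

theorem smallest_eigenvalue_upper_bound_subsets_general {n : ℕ} (G : SimpleGraph (Fin n))
    (S : Finset (Fin n))
    (lam : ℝ) (hlam : IsSmallestEigenvalue (groundedLaplacian G S) lam) :
    ∀ X : Finset (Fin n), X.Nonempty → (∀ v ∈ X, v ∉ S) →
      lam ≤ (boundaryCard G X : ℝ) / X.card := by
  intro X hX hXS
  set y : Fin n → ℝ := (X : Set (Fin n)).indicator 1
  have hyS : ∀ v, ¬ v ∉ S → y v = 0 := fun v hv =>
    Set.indicator_of_notMem (fun hvX => hv (hXS v hvX)) 1
  rw [le_div_iff₀ (by exact_mod_cast hX.card_pos)]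
  calc lam * X.card
      = lam * ((fun v : {v // v ∉ S} => y v) ⬝ᵥ (fun v => y v)) := by
        rw [dotProduct_comp_val y hyS, indicator_dotProduct_self]
    _ ≤ _ := (groundedLaplacian_isHermitian G S).mul_dotProduct_self_le_dotProduct_mulVec hlam.2 _
    _ = boundaryCard G X := by
        rw [groundedLaplacian, submatrix_val_mulVec_comp_val _ hyS, dotProduct_comm,
          dotProduct_comp_val _ hyS, dotProduct_comm, lapR_dotProduct_indicator]

/-- The smallest eigenvalue `lam` of the grounded Laplacian satisfies
`lam ≤ |∂X| / |X|` for every nonempty subset `X ⊆ V \ S`; in particular `lam` is at most the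
minimum of this quantity over all such `X`. -/
theorem smallest_eigenvalue_upper_bound_subsets {n : ℕ} (G : SimpleGraph (Fin n))
    (S : Finset (Fin n)) (hS : S.Nonempty) (hSp : S ⊂ Finset.univ)
    (lam : ℝ) (hlam : IsSmallestEigenvalue (groundedLaplacian G S) lam) :
    ∀ X : Finset (Fin n), X.Nonempty → (∀ v ∈ X, v ∉ S) →
      lam ≤ (boundaryCard G X : ℝ) / X.card :=
  smallest_eigenvalue_upper_bound_subsets_general G S lam hlam
end

section
/- Let G be a finite simple graph on n vertices and S a nonempty proper subset of vertices. Then the smallest eigenvalue λ of the grounded Laplacian L_g(S) satisfies λ ≤ |∂S|/(n−|S|). -/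
open Filter

/-!
Rayleigh quotient with the all-ones vector. Since `λ` is the smallest eigenvalue of the
symmetric matrix `L_g(S)`, the matrix `L_g(S) - λ I` is positive semidefinite, so
`λ · 𝟙ᵀ𝟙 ≤ 𝟙ᵀ L_g(S) 𝟙`. Here `𝟙ᵀ𝟙 = n - |S|`, and padding `𝟙` by zeros on `S` turns
`𝟙ᵀ L_g(S) 𝟙` into `xᵀ L x` for the indicator `x` of the complement of `S`; by the edge-sum
formula `xᵀ L x = ∑_{ij ∈ E} (x i - x j)²` this counts exactly the edges of `∂S`.
-/

section Rayleigh

open Matrix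

variable {m : Type*} [Fintype m] [DecidableEq m] {M : Matrix m m ℝ}

theorem Matrix.IsHermitian.posSemidef_of_forall_eigenvalue_nonneg (hM : M.IsHermitian)
    (h : ∀ μ : ℝ, (∃ x : m → ℝ, x ≠ 0 ∧ M *ᵥ x = μ • x) → 0 ≤ μ) : M.PosSemidef :=
  hM.posSemidef_iff_eigenvalues_nonneg.mpr fun i ↦ h _
    ⟨_, (WithLp.ofLp_eq_zero 2).ne.2 (hM.eigenvectorBasis.orthonormal.ne_zero i),
      hM.mulVec_eigenvectorBasis i⟩

theorem IsSmallestEigenvalue.posSemidef_sub_smul_one {lam : ℝ} (hM : M.IsHermitian)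
    (hlam : IsSmallestEigenvalue M lam) : (M - lam • 1).PosSemidef := by
  refine (hM.sub (isHermitian_one.smul (IsSelfAdjoint.all lam)))
    |>.posSemidef_of_forall_eigenvalue_nonneg ?_
  rintro μ ⟨x, hx, hMx⟩
  have hshift : M *ᵥ x = (μ + lam) • x := by
    rw [sub_mulVec, smul_mulVec, one_mulVec, sub_eq_iff_eq_add] at hMx
    rw [hMx, add_smul]
  linarith [hlam.2 _ ⟨x, hx, hshift⟩]

theorem IsSmallestEigenvalue.mul_dotProduct_self_le {lam : ℝ} (hM : M.IsHermitian)
    (hlam : IsSmallestEigenvalue M lam) (x : m → ℝ) :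
    lam * (x ⬝ᵥ x) ≤ x ⬝ᵥ (M *ᵥ x) := by
  have h := (hlam.posSemidef_sub_smul_one hM).dotProduct_mulVec_nonneg x
  rw [star_trivial, sub_mulVec, dotProduct_sub, smul_mulVec, one_mulVec, dotProduct_smul,
    smul_eq_mul] at h
  linarith

end Rayleigh

section GroundedLaplacian

open Matrix

variable {V : Type*} [Fintype V] [DecidableEq V]

theorem Finset.cast_card_subtype_notMem (S : Finset V) :
    (Fintype.card {v // v ∉ S} : ℝ) = Fintype.card V - S.card := by
  simp [Nat.cast_sub S.card_le_univ]

theorem Matrix.one_dotProduct_submatrix_mulVec_one {R : Type*} [CommRing R]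
    (M : Matrix V V R) (S : Finset V) :
    1 ⬝ᵥ ((M.submatrix Subtype.val Subtype.val : Matrix {v // v ∉ S} {v // v ∉ S} R) *ᵥ 1) =
      (fun v ↦ if v ∈ S then 0 else 1) ⬝ᵥ (M *ᵥ fun v ↦ if v ∈ S then 0 else 1) := by
  have hsub (f : V → R) : ∑ v : {v : V // v ∉ S}, f v = ∑ v ∈ Sᶜ, f v :=
    (Finset.sum_subtype Sᶜ (fun _ ↦ Finset.mem_compl) f).symm
  calc _ = ∑ i ∈ Sᶜ, ∑ j ∈ Sᶜ, M i j := by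
        simp only [dotProduct, mulVec, submatrix_apply, Pi.one_apply, one_mul, mul_one]
        rw [hsub fun i ↦ ∑ j : {v : V // v ∉ S}, M i j]
        simp only [hsub]
    _ = _ := by
        simp [dotProduct, mulVec, Finset.sum_ite, Finset.filter_not, Finset.compl_eq_univ_sdiff]

variable (G : SimpleGraph V) (S : Finset V)

theorem isHermitian_groundedLaplacian : (groundedLaplacian G S).IsHermitian := by
  classical
  refine IsHermitian.submatrix ?_ _
  rw [lapR, IsHermitian, conjTranspose_eq_transpose_of_trivial]
  exact G.isSymm_lapMatrix ℝ

theorem boundaryCard_eq_sum_ite [DecidableRel G.Adj] :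
    (boundaryCard G S : ℝ) = ∑ i, ∑ j, if i ∈ S ∧ j ∉ S ∧ G.Adj i j then 1 else 0 := by
  rw [boundaryCard, Finset.card_filter, Nat.cast_sum, Fintype.sum_prod_type]
  simp only [Nat.cast_ite, Nat.cast_one, Nat.cast_zero]

theorem lapR_dotProduct_mulVec_indicator_compl :
    (fun v ↦ if v ∈ S then 0 else 1) ⬝ᵥ (lapR G *ᵥ fun v ↦ if v ∈ S then 0 else 1) =
      (boundaryCard G S : ℝ) := by
  classical
  set b : V → V → ℝ := fun i j ↦ if i ∈ S ∧ j ∉ S ∧ G.Adj i j then 1 else 0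
  have hcut (i j : V) :
      (if G.Adj i j then ((if i ∈ S then 0 else 1) - (if j ∈ S then 0 else 1) : ℝ) ^ 2 else 0) =
        b i j + b j i := by
    simp only [b, G.adj_comm j i]
    split_ifs <;> simp_all
  rw [← toLinearMap₂'_apply', lapR, SimpleGraph.lapMatrix_toLinearMap₂']
  simp only [hcut, Finset.sum_add_distrib]
  rw [Finset.sum_comm (f := fun i j ↦ b j i), boundaryCard_eq_sum_ite]
  ring

end GroundedLaplacian

theorem smallest_eigenvalue_upper_bound_boundary_general {n : ℕ} (G : SimpleGraph (Fin n))
    (S : Finset (Fin n))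
    (lam : ℝ) (hlam : IsSmallestEigenvalue (groundedLaplacian G S) lam) :
    lam ≤ (boundaryCard G S : ℝ) / ((n : ℝ) - S.card) := by
  have hcard : (n : ℝ) - S.card = Fintype.card {v // v ∉ S} := by
    rw [Finset.cast_card_subtype_notMem, Fintype.card_fin]
  have hpos : (0 : ℝ) < n - S.card := by
    obtain ⟨x, hx, -⟩ := hlam.1
    obtain ⟨v, -⟩ := Function.ne_iff.mp hx
    rw [hcard]
    exact_mod_cast Fintype.card_pos_iff.mpr ⟨v⟩
  have hrayleigh := hlam.mul_dotProduct_self_le (isHermitian_groundedLaplacian G S) 1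
  rw [groundedLaplacian, Matrix.one_dotProduct_submatrix_mulVec_one,
    lapR_dotProduct_mulVec_indicator_compl, one_dotProduct_one] at hrayleigh
  rw [le_div_iff₀ hpos, hcard]
  exact hrayleigh

/-- The smallest eigenvalue `lam` of the grounded Laplacian satisfies
`lam ≤ |∂S| / (n - |S|)`. -/
theorem smallest_eigenvalue_upper_bound_boundary {n : ℕ} (G : SimpleGraph (Fin n))
    (S : Finset (Fin n)) (hS : S.Nonempty) (hSp : S ⊂ Finset.univ)
    (lam : ℝ) (hlam : IsSmallestEigenvalue (groundedLaplacian G S) lam) :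
    lam ≤ (boundaryCard G S : ℝ) / ((n : ℝ) - S.card) :=
  smallest_eigenvalue_upper_bound_boundary_general G S lam hlam
end

section
/- Let H be a connected finite simple graph on m ≥ 2 vertices with Laplacian matrix L̄, whose second-smallest eigenvalue is λ₂(L̄). Let s be a positive integer and let Δ = diag(α₁,…,α_m) be a diagonal matrix with integer entries satisfying 0 ≤ α_i ≤ s for all i, and set B = Σ_{i=1}^{m} α_i. Let x be a nonnegative eigenvector corresponding to the smallest eigenvalue of L̄ + Δ, normalized so that its largest component equals 1. Then the smallest component of x satisfies x_min ≥ 1 − 2·sqrt(s·B)/λ₂(L̄). -/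
open Filter

/-!
Write `L` for the Laplacian and `α` for the diagonal. The eigen-equation reads
`(L x)ᵢ = (λ - αᵢ) xᵢ`, and since the columns of `L` sum to zero, `λ Σ xᵢ = Σ αᵢ xᵢ`; hence
`0 ≤ λ ≤ s`, and then `(λ - αᵢ)² ≤ s (λ + αᵢ)` together with `xᵢ² ≤ xᵢ` gives
`‖L x‖² ≤ 2 s Σ αᵢ xᵢ ≤ 2 s B`. On the other hand, `L` vanishes exactly on the constants
(connectedness) and all its other eigenvalues are at least `λ₂`, so after removing the mean of
`x`, `λ₂² (xᵢ - xⱼ)² ≤ 2 ‖L x‖²`. Taking `xⱼ = 1` gives `λ₂² (1 - xᵢ)² ≤ 4 s B`.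
-/

open Matrix

namespace Multiset

variable {α : Type*} [LinearOrder α] {s : Multiset α} {a : α}

theorem lt_sort_getD_one_and_forall_sort_getD_one_le (ha : ∀ y ∈ s, a ≤ y)
    (hcount : s.count a = 1) (hcard : 2 ≤ card s) (d : α) :
    a < (s.sort (· ≤ ·)).getD 1 d ∧ ∀ y ∈ s, y ≠ a → (s.sort (· ≤ ·)).getD 1 d ≤ y := by
  have hsorted := s.pairwise_sort (· ≤ ·)
  have hmem : ∀ y, y ∈ s ↔ y ∈ s.sort (· ≤ ·) := fun y => (mem_sort _).symm
  have hcount' : (s.sort (· ≤ ·)).count a = 1 := by rw [← coe_count, sort_eq, hcount]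
  obtain ⟨b, c, t, hl⟩ : ∃ b c t, s.sort (· ≤ ·) = b :: c :: t := by
    match s.sort (· ≤ ·), s.length_sort (· ≤ ·) with
    | b :: c :: t, _ => exact ⟨b, c, t, rfl⟩
    | [], h | [_], h => simp only [List.length_nil, List.length_cons] at h; omega
  rw [hl] at hsorted hmem hcount' ⊢
  simp only [List.pairwise_cons, List.mem_cons] at hsorted hmem
  have hab : a = b := by
    refine le_antisymm (ha b ((hmem b).2 (.inl rfl))) ?_
    rcases (hmem a).1 (count_pos.1 (by omega)) with h | h
    · exact h.ge
    · exact hsorted.1 a h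
  subst hab
  have hca : c ≠ a := by
    rintro rfl
    simp at hcount'
  refine ⟨lt_of_le_of_ne (hsorted.1 c (.inl rfl)) hca.symm, fun y hy hya => ?_⟩
  rcases (hmem y).1 hy with h | h | h
  · exact absurd h hya
  · exact h.ge
  · exact hsorted.2.1 y h

end Multiset

namespace Matrix

variable {n : Type*} [Fintype n] {A : Matrix n n ℝ}

namespace IsHermitian

theorem dotProduct_mulVec_comm (hA : A.IsHermitian) (v w : n → ℝ) :
    v ⬝ᵥ (A *ᵥ w) = (A *ᵥ v) ⬝ᵥ w := by
  rw [dotProduct_mulVec, ← mulVec_transpose, ← conjTranspose_eq_transpose_of_trivial, hA.eq]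

variable [DecidableEq n]

theorem roots_charpoly_eq_map (hA : A.IsHermitian) :
    A.charpoly.roots = Finset.univ.val.map hA.eigenvalues := by
  simp [hA.roots_charpoly_eq_eigenvalues]

theorem count_roots_charpoly (hA : A.IsHermitian) (a : ℝ) :
    A.charpoly.roots.count a = Fintype.card {i // hA.eigenvalues i = a} := by
  rw [hA.roots_charpoly_eq_map, Multiset.count_map, Fintype.card_subtype, Finset.card_def,
    Finset.filter_val]
  simp only [eq_comm]

theorem dotProduct_self_eq_sum_sq (hA : A.IsHermitian) (w : n → ℝ) :
    w ⬝ᵥ w = ∑ k, (⇑(hA.eigenvectorBasis k) ⬝ᵥ w) ^ 2 := by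
  have h := hA.eigenvectorBasis.sum_inner_mul_inner (WithLp.toLp 2 w) (WithLp.toLp 2 w)
  simp only [EuclideanSpace.inner_eq_star_dotProduct, star_trivial, dotProduct_comm w] at h
  simpa only [sq] using h.symm

theorem eigenvectorBasis_dotProduct_mulVec (hA : A.IsHermitian) (k : n) (w : n → ℝ) :
    ⇑(hA.eigenvectorBasis k) ⬝ᵥ (A *ᵥ w) =
      hA.eigenvalues k * (⇑(hA.eigenvectorBasis k) ⬝ᵥ w) := by
  rw [hA.dotProduct_mulVec_comm, hA.mulVec_eigenvectorBasis, smul_dotProduct, smul_eq_mul]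

theorem sq_mul_dotProduct_self_le (hA : A.IsHermitian) {μ : ℝ}
    (hμ : ∀ k, hA.eigenvalues k ≠ 0 → μ ^ 2 ≤ hA.eigenvalues k ^ 2)
    {z : n → ℝ} (hz : ∀ v, A *ᵥ v = 0 → v ⬝ᵥ z = 0) :
    μ ^ 2 * (z ⬝ᵥ z) ≤ (A *ᵥ z) ⬝ᵥ (A *ᵥ z) := by
  rw [hA.dotProduct_self_eq_sum_sq z, hA.dotProduct_self_eq_sum_sq (A *ᵥ z), Finset.mul_sum]
  refine Finset.sum_le_sum fun k _ => ?_
  rw [eigenvectorBasis_dotProduct_mulVec, mul_pow]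
  by_cases hk : hA.eigenvalues k = 0
  · have hker : A *ᵥ ⇑(hA.eigenvectorBasis k) = 0 := by
      rw [hA.mulVec_eigenvectorBasis, hk, zero_smul]
    simp [hz _ hker]
  · exact mul_le_mul_of_nonneg_right (hμ k hk) (sq_nonneg _)

end IsHermitian

theorem mulVec_eq_of_add_diagonal_mulVec_eq_smul [DecidableEq n] {d x : n → ℝ} {lam : ℝ}
    (h : (A + diagonal d) *ᵥ x = lam • x) : A *ᵥ x = fun j => (lam - d j) * x j := by
  ext j
  have hj := congrFun h j
  simp only [add_mulVec, mulVec_diagonal, Pi.add_apply, Pi.smul_apply, smul_eq_mul] at hj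
  linarith

theorem PosSemidef.secondSmallestEigenvalue_pos_and_le [DecidableEq n] (hA : A.PosSemidef)
    (h0 : Fintype.card {i // hA.isHermitian.eigenvalues i = 0} = 1)
    (hn : 2 ≤ Fintype.card n) :
    0 < secondSmallestEigenvalue A ∧
      ∀ k, hA.isHermitian.eigenvalues k ≠ 0 →
        secondSmallestEigenvalue A ≤ hA.isHermitian.eigenvalues k := by
  have hroots := hA.isHermitian.roots_charpoly_eq_map
  obtain ⟨hpos, hle⟩ := Multiset.lt_sort_getD_one_and_forall_sort_getD_one_le (a := 0)
    (s := A.charpoly.roots) (by simp [hroots, hA.eigenvalues_nonneg])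
    (by rw [hA.isHermitian.count_roots_charpoly, h0]) (by simpa [hroots] using hn) 0
  exact ⟨hpos, fun k hk => hle _ (by simp [hroots]) hk⟩

end Matrix

theorem sq_sub_le_two_mul_dotProduct_self {ι : Type*} [Fintype ι] (z : ι → ℝ) (i j : ι) :
    (z i - z j) ^ 2 ≤ 2 * (z ⬝ᵥ z) := by
  classical
  rcases eq_or_ne i j with rfl | hij
  · simpa using dotProduct_self_star_nonneg z
  have hpair : z i ^ 2 + z j ^ 2 ≤ z ⬝ᵥ z := by
    rw [← Finset.sum_pair (f := fun k => z k ^ 2) hij]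
    simp only [dotProduct, ← sq]
    exact Finset.sum_le_sum_of_subset_of_nonneg (Finset.subset_univ _)
      fun k _ _ => sq_nonneg (z k)
  nlinarith [sq_nonneg (z i + z j)]

namespace SimpleGraph

variable {V : Type*} [Fintype V] [DecidableEq V] (G : SimpleGraph V)

theorem lapR_posSemidef : (lapR G).PosSemidef := by
  classical
  exact G.posSemidef_lapMatrix ℝ

theorem lapR_mulVec_const (c : ℝ) : lapR G *ᵥ (fun _ => c) = 0 := by
  have h : lapR G *ᵥ (fun _ => 1) = 0 := by
    classical
    exact G.lapMatrix_mulVec_const_eq_zero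
  rw [show (fun _ => c) = c • fun _ : V => (1 : ℝ) by ext; simp, mulVec_smul, h, smul_zero]

theorem sum_lapR_mulVec (x : V → ℝ) : ∑ i, (lapR G *ᵥ x) i = 0 := by
  have h := (lapR_posSemidef G).isHermitian.dotProduct_mulVec_comm (fun _ => 1) x
  rw [lapR_mulVec_const, zero_dotProduct] at h
  simpa [dotProduct] using h

variable {G}

theorem finrank_ker_lapR (hG : G.Connected) :
    Module.finrank ℝ (LinearMap.ker (lapR G).mulVecLin) = 1 := by
  -- the instance that `lapR` uses, so that the library's `lapMatrix` lemmas match syntactically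
  let := Classical.decRel G.Adj
  have := hG.nonempty
  have := hG.preconnected.subsingleton_connectedComponent
  rw [← le_antisymm (Fintype.card_le_one_iff_subsingleton.2 this) Fintype.card_pos,
    G.card_connectedComponent_eq_finrank_ker_toLin'_lapMatrix]
  rfl

theorem card_eigenvalues_lapR_eq_zero (hG : G.Connected) :
    Fintype.card {i // (lapR_posSemidef G).isHermitian.eigenvalues i = 0} = 1 := by
  have hrank := (lapR_posSemidef G).isHermitian.rank_eq_card_non_zero_eigs
  have hsum := LinearMap.finrank_range_add_finrank_ker (lapR G).mulVecLin
  rw [Fintype.card_subtype_compl, Matrix.rank] at hrank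
  rw [Module.finrank_fintype_fun_eq_card, finrank_ker_lapR hG] at hsum
  have := Fintype.card_subtype_le fun i => (lapR_posSemidef G).isHermitian.eigenvalues i = 0
  omega

theorem secondSmallestEigenvalue_lapR_pos_and_le (hG : G.Connected)
    (hV : 2 ≤ Fintype.card V) :
    0 < secondSmallestEigenvalue (lapR G) ∧
      ∀ k, (lapR_posSemidef G).isHermitian.eigenvalues k ≠ 0 →
        secondSmallestEigenvalue (lapR G) ≤ (lapR_posSemidef G).isHermitian.eigenvalues k :=
  (lapR_posSemidef G).secondSmallestEigenvalue_pos_and_le (card_eigenvalues_lapR_eq_zero hG) hV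

theorem sq_secondSmallestEigenvalue_mul_dotProduct_le (hG : G.Connected)
    (hV : 2 ≤ Fintype.card V) {z : V → ℝ} (hz : ∑ i, z i = 0) :
    secondSmallestEigenvalue (lapR G) ^ 2 * (z ⬝ᵥ z) ≤ (lapR G *ᵥ z) ⬝ᵥ (lapR G *ᵥ z) := by
  obtain ⟨hpos, hle⟩ := secondSmallestEigenvalue_lapR_pos_and_le hG hV
  refine (lapR_posSemidef G).isHermitian.sq_mul_dotProduct_self_le
    (fun k hk => pow_le_pow_left₀ hpos.le (hle k hk) 2) fun v hv => ?_
  obtain ⟨j⟩ := hG.nonempty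
  have hconst : ∀ i, v i = v j := by
    classical
    exact fun i => G.lapMatrix_mulVec_eq_zero_iff_forall_reachable.1 hv i j (hG.preconnected i j)
  calc v ⬝ᵥ z = ∑ i, v j * z i := Finset.sum_congr rfl fun i _ => by rw [hconst i]
    _ = 0 := by rw [← Finset.mul_sum, hz, mul_zero]

theorem sq_secondSmallestEigenvalue_mul_sq_sub_le (hG : G.Connected)
    (hV : 2 ≤ Fintype.card V) (x : V → ℝ) (i j : V) :
    secondSmallestEigenvalue (lapR G) ^ 2 * (x i - x j) ^ 2 ≤
      2 * ((lapR G *ᵥ x) ⬝ᵥ (lapR G *ᵥ x)) := by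
  set z : V → ℝ := fun k => x k - (∑ l, x l) / Fintype.card V
  have hz : ∑ k, z k = 0 := by
    have : (Fintype.card V : ℝ) ≠ 0 := by positivity
    simp only [z, Finset.sum_sub_distrib, Finset.sum_const, Finset.card_univ, nsmul_eq_mul]
    field_simp
    ring
  have hLz : lapR G *ᵥ z = lapR G *ᵥ x := by
    rw [show z = x - fun _ => (∑ l, x l) / Fintype.card V from rfl, mulVec_sub,
      lapR_mulVec_const, sub_zero]
  have hxz : x i - x j = z i - z j := by simp only [z]; ring
  calc secondSmallestEigenvalue (lapR G) ^ 2 * (x i - x j) ^ 2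
      ≤ secondSmallestEigenvalue (lapR G) ^ 2 * (2 * (z ⬝ᵥ z)) := by
        rw [hxz]
        exact mul_le_mul_of_nonneg_left (sq_sub_le_two_mul_dotProduct_self z i j) (sq_nonneg _)
    _ ≤ 2 * ((lapR G *ᵥ x) ⬝ᵥ (lapR G *ᵥ x)) := by
        rw [← hLz, mul_left_comm]
        exact mul_le_mul_of_nonneg_left (sq_secondSmallestEigenvalue_mul_dotProduct_le hG hV hz)
          zero_le_two

end SimpleGraph

section WeightedAverage

variable {ι : Type*} [Fintype ι] {x a : ι → ℝ} {lam s : ℝ}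

theorem mem_Icc_of_mul_sum_eq_sum_mul (hx : ∀ i, 0 ≤ x i) (hpos : 0 < ∑ i, x i)
    (ha : ∀ i, a i ∈ Set.Icc 0 s) (hmean : lam * ∑ i, x i = ∑ i, a i * x i) :
    lam ∈ Set.Icc 0 s := by
  have hlo : 0 ≤ ∑ i, a i * x i := Finset.sum_nonneg fun i _ => mul_nonneg (ha i).1 (hx i)
  have hhi : ∑ i, a i * x i ≤ s * ∑ i, x i := by
    rw [Finset.mul_sum]
    exact Finset.sum_le_sum fun i _ => mul_le_mul_of_nonneg_right (ha i).2 (hx i)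
  constructor <;> nlinarith

theorem sq_sub_le_mul_add {p q : ℝ} (hp : p ∈ Set.Icc 0 s) (hq : q ∈ Set.Icc 0 s) :
    (p - q) ^ 2 ≤ s * (p + q) := by
  obtain ⟨hp0, hps⟩ := hp
  obtain ⟨hq0, hqs⟩ := hq
  nlinarith [mul_nonneg hp0 hq0, mul_nonneg (sub_nonneg.2 hps) hp0,
    mul_nonneg (sub_nonneg.2 hqs) hq0]

theorem sum_sq_sub_mul_le (hx : ∀ i, x i ∈ Set.Icc 0 1) (hpos : 0 < ∑ i, x i)
    (ha : ∀ i, a i ∈ Set.Icc 0 s) (hsum : ∑ i, (lam - a i) * x i = 0) :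
    ∑ i, ((lam - a i) * x i) ^ 2 ≤ 2 * s * ∑ i, a i := by
  have hmean : lam * ∑ i, x i = ∑ i, a i * x i := by
    simpa [sub_mul, Finset.sum_sub_distrib, Finset.mul_sum, sub_eq_zero] using hsum
  have hlam := mem_Icc_of_mul_sum_eq_sum_mul (fun i => (hx i).1) hpos ha hmean
  have hs : 0 ≤ s := hlam.1.trans hlam.2
  calc ∑ i, ((lam - a i) * x i) ^ 2 ≤ ∑ i, s * (lam + a i) * x i := by
        refine Finset.sum_le_sum fun i _ => ?_
        obtain ⟨hx0, hx1⟩ := hx i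
        have hsq : x i ^ 2 ≤ x i := by nlinarith
        have hweight : 0 ≤ s * (lam + a i) := mul_nonneg hs (add_nonneg hlam.1 (ha i).1)
        rw [mul_pow]
        exact mul_le_mul (sq_sub_le_mul_add hlam (ha i)) hsq (sq_nonneg _) hweight
    _ = 2 * s * ∑ i, a i * x i := by
        simp only [mul_add, add_mul, Finset.sum_add_distrib, ← Finset.mul_sum, mul_assoc, hmean]
        ring
    _ ≤ 2 * s * ∑ i, a i :=
        mul_le_mul_of_nonneg_left (Finset.sum_le_sum fun i _ =>
          mul_le_of_le_one_right (ha i).1 (hx i).2) (by positivity)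

end WeightedAverage

theorem eigenvector_component_lower_bound_general {m : ℕ} (hm : 2 ≤ m)
    (H : SimpleGraph (Fin m)) (hH : H.Connected)
    (s : ℕ) (α : Fin m → ℕ) (hα : ∀ i, α i ≤ s)
    (lam : ℝ)
    (x : Fin m → ℝ)
    (heig : (lapR H + Matrix.diagonal fun i => (α i : ℝ)).mulVec x = lam • x)
    (hxnn : ∀ i, 0 ≤ x i) (hxle : ∀ i, x i ≤ 1) (hxmax : ∃ i, x i = 1) :
    ∀ i, 1 - 2 * Real.sqrt ((s : ℝ) * ∑ j, (α j : ℝ)) / secondSmallestEigenvalue (lapR H)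
      ≤ x i := by
  intro i
  obtain ⟨i₀, hi₀⟩ := hxmax
  set B : ℝ := ∑ j, (α j : ℝ)
  have hV : 2 ≤ Fintype.card (Fin m) := by rwa [Fintype.card_fin]
  have hgap := (SimpleGraph.secondSmallestEigenvalue_lapR_pos_and_le hH hV).1
  have hLx := mulVec_eq_of_add_diagonal_mulVec_eq_smul heig
  have hnorm : (lapR H *ᵥ x) ⬝ᵥ (lapR H *ᵥ x) ≤ 2 * s * B := by
    have hsum := H.sum_lapR_mulVec x
    have hpos : 0 < ∑ j, x j := lt_of_lt_of_le (by rw [hi₀]; exact one_pos)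
      (Finset.single_le_sum (fun j _ => hxnn j) (Finset.mem_univ i₀))
    rw [hLx] at hsum ⊢
    simpa [dotProduct, sq] using sum_sq_sub_mul_le (fun j => ⟨hxnn j, hxle j⟩) hpos
      (fun j => ⟨by positivity, by exact_mod_cast hα j⟩) hsum
  have hsq : (secondSmallestEigenvalue (lapR H) * (1 - x i)) ^ 2 ≤ (2 * √(s * B)) ^ 2 := by
    have h := SimpleGraph.sq_secondSmallestEigenvalue_mul_sq_sub_le hH hV x i₀ i
    rw [hi₀] at h
    rw [mul_pow, mul_pow, Real.sq_sqrt (by positivity)]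
    linarith
  rw [sub_le_comm, le_div_iff₀ hgap, mul_comm]
  exact le_of_pow_le_pow_left₀ two_ne_zero (by positivity) hsq

/-- Let `H` be a connected graph on `m ≥ 2` vertices with Laplacian `L̄ = lapR H`,
`s` a positive integer, `Δ = diag(α)` with `0 ≤ αᵢ ≤ s`, and `B = Σ αᵢ`. If `x` is a
nonnegative eigenvector for the smallest eigenvalue of `L̄ + Δ`, normalized so that its largest
component equals `1`, then every component satisfies `x i ≥ 1 - 2√(sB)/λ₂(L̄)`. -/
theorem eigenvector_component_lower_bound {m : ℕ} (hm : 2 ≤ m)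
    (H : SimpleGraph (Fin m)) (hH : H.Connected)
    (s : ℕ) (hs : 0 < s) (α : Fin m → ℕ) (hα : ∀ i, α i ≤ s)
    (lam : ℝ)
    (hlam : IsSmallestEigenvalue (lapR H + Matrix.diagonal fun i => (α i : ℝ)) lam)
    (x : Fin m → ℝ) (hx0 : x ≠ 0)
    (heig : (lapR H + Matrix.diagonal fun i => (α i : ℝ)).mulVec x = lam • x)
    (hxnn : ∀ i, 0 ≤ x i) (hxle : ∀ i, x i ≤ 1) (hxmax : ∃ i, x i = 1) :
    ∀ i, 1 - 2 * Real.sqrt ((s : ℝ) * ∑ j, (α j : ℝ)) / secondSmallestEigenvalue (lapR H)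
      ≤ x i :=
  eigenvector_component_lower_bound_general hm H hH s α hα lam x heig hxnn hxle hxmax
end
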